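/- arXiv:1901.01684 — 2 statements merged into one kernel-verified Lean document; each statement's English description precedes it below -/
import Mathlib

section
/- Let G be a graph with m ≥ 5 and vertex classes V_1,...,V_5 each of size m, containing a perfect matching between V_1 and V_2, a perfect matching between V_3 and V_4, and all edges between every other pair of distinct classes (this graph is called H_m). Then the chromatic number of H_m is 5 and H_m admits a partition of its vertex set into 3 parts (V_1 ∪ V_2, V_3 ∪ V_4, V_5) such that each part induces a graph of maximum degree at most 1. -/
set_option maxHeartbeats 1000000

/-- The graph `H_m`: five classes `V_1, …, V_5` of size `m` (indexed by `Fin 5`), with a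
perfect matching between `V_1` and `V_2`, a perfect matching between `V_3` and `V_4`,
and all edges between every other pair of distinct classes. -/
def Hm (m : ℕ) : SimpleGraph (Fin 5 × Fin m) :=
  SimpleGraph.fromRel fun u v =>
    u.1 ≠ v.1 ∧
      (((u.1 = 0 ∧ v.1 = 1) ∨ (u.1 = 1 ∧ v.1 = 0) ∨
        (u.1 = 2 ∧ v.1 = 3) ∨ (u.1 = 3 ∧ v.1 = 2)) → u.2 = v.2)

lemma Hm_adj {m : ℕ} {u v : Fin 5 × Fin m} : (Hm m).Adj u v ↔
    u.1 ≠ v.1 ∧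
      (((u.1 = 0 ∧ v.1 = 1) ∨ (u.1 = 1 ∧ v.1 = 0) ∨
        (u.1 = 2 ∧ v.1 = 3) ∨ (u.1 = 3 ∧ v.1 = 2)) → u.2 = v.2) := by
  simp only [Hm, SimpleGraph.fromRel_adj]
  constructor
  · rintro ⟨hne, h | h⟩
    · exact h
    · exact ⟨fun he => h.1 he.symm, fun hc => (h.2 (by tauto)).symm⟩
  · intro h
    exact ⟨fun he => h.1 (congrArg Prod.fst he), Or.inl h⟩

/-- For `m ≥ 5`, the graph `H_m` has chromatic number 5, and the partition of its
vertices into the three parts `V_1 ∪ V_2`, `V_3 ∪ V_4`, `V_5` is such that each part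
induces a graph of maximum degree at most 1. -/
theorem stmt_12 (m : ℕ) (hm : 5 ≤ m) :
    (Hm m).chromaticNumber = 5 ∧
    ∀ p : Fin 5 × Fin m → Fin 3,
      p = (fun v => if v.1.val ≤ 1 then 0 else if v.1.val ≤ 3 then 1 else 2) →
      ∀ v : Fin 5 × Fin m, {u | p u = p v ∧ (Hm m).Adj v u}.Subsingleton := by
  have hm0 : 0 < m := by omega
  constructor
  · apply le_antisymm
    · have : (Hm m).Colorable 5 := by
        refine ⟨⟨fun v => v.1, fun {a b} hab => ?_⟩⟩
        exact (Hm_adj.mp hab).1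
      simpa using this.chromaticNumber_le
    · have hclq : (Hm m).IsClique ((Finset.univ.image (fun i : Fin 5 => (i, (⟨0, hm0⟩ : Fin m)))) : Finset (Fin 5 × Fin m)) := by
        intro a ha b hb hne
        simp only [Finset.coe_image, Set.mem_image, Finset.mem_coe, Finset.mem_univ] at ha hb
        obtain ⟨i, -, rfl⟩ := ha
        obtain ⟨j, -, rfl⟩ := hb
        rw [Hm_adj]
        refine ⟨fun h => hne (by simp only [Prod.mk.injEq]; exact ⟨h, trivial⟩), fun _ => rfl⟩
      have := hclq.card_le_chromaticNumber
      rwa [Finset.card_image_of_injective _ (fun a b h => (Prod.mk.injEq _ _ _ _).mp h |>.1),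
        Finset.card_univ, Fintype.card_fin] at this
  · rintro p rfl v u hu u' hu'
    obtain ⟨hpu, hadj⟩ := hu
    obtain ⟨hpu', hadj'⟩ := hu'
    rw [Hm_adj] at hadj hadj'
    simp only [Set.mem_setOf_eq] at hpu hpu'
    have hcls : ∀ j k : Fin 5,
        ((if (j:ℕ) ≤ 1 then (0:Fin 3) else if (j:ℕ) ≤ 3 then 1 else 2) =
         (if (k:ℕ) ≤ 1 then (0:Fin 3) else if (k:ℕ) ≤ 3 then 1 else 2)) →
        ((j:ℕ) ≤ 1 ∧ (k:ℕ) ≤ 1) ∨ (2 ≤ (j:ℕ) ∧ (j:ℕ) ≤ 3 ∧ 2 ≤ (k:ℕ) ∧ (k:ℕ) ≤ 3) ∨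
          ((j:ℕ) = 4 ∧ (k:ℕ) = 4) := by decide
    have h01 : ∀ a b : Fin 5, (a:ℕ) ≤ 1 → (b:ℕ) ≤ 1 → a ≠ b →
        (a = 0 ∧ b = 1 ∨ a = 1 ∧ b = 0) := by decide
    have h23 : ∀ a b : Fin 5, 2 ≤ (a:ℕ) → (a:ℕ) ≤ 3 → 2 ≤ (b:ℕ) → (b:ℕ) ≤ 3 → a ≠ b →
        (a = 2 ∧ b = 3 ∨ a = 3 ∧ b = 2) := by decide
    have hone : ∀ a b : Fin 5, (a = 0 ∧ b = 1 ∨ a = 1 ∧ b = 0) →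
        ∀ c : Fin 5, (a = 0 ∧ c = 1 ∨ a = 1 ∧ c = 0) → b = c := by decide
    have htwo : ∀ a b : Fin 5, (a = 2 ∧ b = 3 ∨ a = 3 ∧ b = 2) →
        ∀ c : Fin 5, (a = 2 ∧ c = 3 ∨ a = 3 ∧ c = 2) → b = c := by decide
    rcases hcls u.1 v.1 hpu with h | h | h <;> rcases hcls u'.1 v.1 hpu' with h' | h' | h'
    · have d := h01 v.1 u.1 h.2 h.1 hadj.1
      have d' := h01 v.1 u'.1 h'.2 h'.1 hadj'.1
      have e2 : v.2 = u.2 := hadj.2 (by tauto)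
      have e2' : v.2 = u'.2 := hadj'.2 (by tauto)
      exact Prod.ext (hone v.1 u.1 d u'.1 d') (e2 ▸ e2' ▸ rfl)
    all_goals first
      | (exfalso; omega)
      | skip
    · have d := h23 v.1 u.1 h.2.2.1 h.2.2.2 h.1 h.2.1 hadj.1
      have d' := h23 v.1 u'.1 h'.2.2.1 h'.2.2.2 h'.1 h'.2.1 hadj'.1
      have e2 : v.2 = u.2 := hadj.2 (by tauto)
      have e2' : v.2 = u'.2 := hadj'.2 (by tauto)
      exact Prod.ext (htwo v.1 u.1 d u'.1 d') (e2 ▸ e2' ▸ rfl)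
end

section
/- Let k ≥ 2, s, t with k+2 ≤ s ≤ 2k, let a be an integer with R(K_{a+1}, K_{s-k}) > k, and let φ be a red/blue colouring of K_k with no red clique of size a+1 and no blue clique of size s-k. Suppose the vertex set is partitioned into A_1,...,A_k, B_1,...,B_k; colour: all edges inside each A_i and inside each B_i red; all edges incident to any A_i going between distinct index classes blue; and edges between B_i and B_j (i<j) with colour φ({i,j}). If additionally every red clique inside each A_i has fewer than t vertices and every red clique inside each B_i has fewer than ⌈t/a⌉ vertices, then the whole colouring contains no red K_t and no blue K_s. -/
/-- From a finset of size at least `n`, extract an embedding of `Fin n` into it. -/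
lemma exists_emb_of_card_le {α : Type*} (T : Finset α) {n : ℕ} (h : n ≤ T.card) :
    ∃ g : Fin n ↪ α, ∀ i, g i ∈ T := by
  refine ⟨(Fin.castLEEmb h).trans (T.equivFin.symm.toEmbedding.trans
    (Function.Embedding.subtype _)), fun i => ?_⟩
  exact (T.equivFin.symm (Fin.castLE h i)).2

/-- The lower-bound colouring for the `(K_t, K_s)` problem with `k+2 ≤ s ≤ 2k`.
Vertices are split into classes `A_1, …, A_k, B_1, …, B_k` via an index `idx : V → Fin k`
and a side (`true` = `A`, `false` = `B`); `Gin` records the edges inside the classes.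
The graph has all edges between distinct indices plus the edges of `Gin`; the colouring
(`true` = red, `false` = blue) makes all `Gin` edges red, edges between distinct indices
touching some `A_i` blue, and colours the `B_i`–`B_j` edges by a colouring `φ` of `K_k`
with no red `K_{a+1}` and no blue `K_{s-k}`.  If every red clique inside the `A_i` has
fewer than `t` vertices and every red clique inside the `B_i` has fewer than `⌈t/a⌉`
vertices, then there is no red `K_t` and no blue `K_s`. -/
theorem stmt_19 {V : Type*} (k s t a : ℕ) (hk : 2 ≤ k) (hs₁ : k + 2 ≤ s) (hs₂ : s ≤ 2 * k)
    (hts : t ≥ s) (idx : V → Fin k) (side : V → Bool)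
    (Gin : SimpleGraph V)
    (hin : ∀ u v, Gin.Adj u v → idx u = idx v ∧ side u = side v)
    (φ : Fin k → Fin k → Bool) (hφsymm : ∀ i j, φ i j = φ j i)
    (hφred : ¬ ∃ g : Fin (a + 1) ↪ Fin k, ∀ i j, i ≠ j → φ (g i) (g j) = true)
    (hφblue : ¬ ∃ g : Fin (s - k) ↪ Fin k, ∀ i j, i ≠ j → φ (g i) (g j) = false)
    (hA : ¬ ∃ f : Fin t ↪ V, (∀ i, side (f i) = true) ∧
      ∀ i j, i ≠ j → Gin.Adj (f i) (f j))
    (hB : ¬ ∃ f : Fin ((t + a - 1) / a) ↪ V, (∀ i, side (f i) = false) ∧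
      ∀ i j, i ≠ j → Gin.Adj (f i) (f j)) :
    (¬ ∃ f : Fin t ↪ V, ∀ i j, i ≠ j →
      (SimpleGraph.fromRel fun u v => idx u ≠ idx v ∨ Gin.Adj u v).Adj (f i) (f j) ∧
        (if idx (f i) = idx (f j) then true
          else if side (f i) = false ∧ side (f j) = false then φ (idx (f i)) (idx (f j))
          else false) = true) ∧
    (¬ ∃ f : Fin s ↪ V, ∀ i j, i ≠ j →
      (SimpleGraph.fromRel fun u v => idx u ≠ idx v ∨ Gin.Adj u v).Adj (f i) (f j) ∧
        (if idx (f i) = idx (f j) then true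
          else if side (f i) = false ∧ side (f j) = false then φ (idx (f i)) (idx (f j))
          else false) = false) := by
  have ht : 1 ≤ t := by omega
  -- a ≥ 1, else φ would have a red K_1 trivially
  have ha : 1 ≤ a := by
    by_contra h
    have ha0 : a = 0 := by omega
    subst ha0
    have hone : ∀ i j : Fin (0 + 1), i = j := fun i j => Fin.ext (by omega)
    exact hφred ⟨⟨fun _ => ⟨0, by omega⟩, fun i j _ => hone i j⟩,
      fun i j hij => absurd (hone i j) hij⟩
  set n : ℕ := (t + a - 1) / a with hn
  have hn1 : 1 ≤ n := Nat.one_le_div_iff (by omega) |>.mpr (by omega)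
  have hmul : a * n ≤ t + a - 1 := Nat.mul_div_le _ _
  constructor
  · -- no red K_t
    rintro ⟨f, hf⟩
    have key : ∀ i j, i ≠ j →
        (idx (f i) = idx (f j) → Gin.Adj (f i) (f j)) ∧
        (idx (f i) ≠ idx (f j) →
          side (f i) = false ∧ side (f j) = false ∧ φ (idx (f i)) (idx (f j)) = true) := by
      intro i j hij
      obtain ⟨hadj, hcol⟩ := hf i j hij
      rw [SimpleGraph.fromRel_adj] at hadj
      constructor
      · intro he
        rcases hadj.2 with (h | h) | (h | h)
        · exact absurd he h
        · exact h
        · exact absurd he.symm h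
        · exact h.symm
      · intro hne
        rw [if_neg hne] at hcol
        by_cases hb : side (f i) = false ∧ side (f j) = false
        · rw [if_pos hb] at hcol; exact ⟨hb.1, hb.2, hcol⟩
        · rw [if_neg hb] at hcol; exact absurd hcol (by simp)
    set c : Fin t → Fin k := fun i => idx (f i) with hc
    by_cases hone : ∀ i j : Fin t, c i = c j
    · -- all in one class
      have hGadj : ∀ i j : Fin t, i ≠ j → Gin.Adj (f i) (f j) := fun i j hij =>
        (key i j hij).1 (hone i j)
      have hsd : ∀ i : Fin t, side (f i) = side (f ⟨0, ht⟩) := by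
        intro i
        by_cases h : i = ⟨0, ht⟩
        · rw [h]
        · exact (hin _ _ (hGadj i ⟨0, ht⟩ h)).2
      cases hb : side (f ⟨0, ht⟩) with
      | true => exact hA ⟨f, fun i => (hsd i).trans hb, hGadj⟩
      | false =>
        have hnt : n ≤ t := by
          have h1 : t + a - 1 ≤ a * t := by
            obtain ⟨a', rfl⟩ := Nat.exists_eq_add_of_le ha
            obtain ⟨t', rfl⟩ := Nat.exists_eq_add_of_le ht
            have : (1 + a') * (1 + t') = 1 + a' + t' + a' * t' := by ring
            omega
          have h2 := Nat.div_le_div_right (c := a) h1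
          rwa [Nat.mul_div_cancel_left t (by omega)] at h2
        refine hB ⟨(Fin.castLEEmb hnt).trans f, fun i => (hsd _).trans hb, ?_⟩
        intro i j hij
        exact hGadj _ _ (by simpa using Fin.castLE_injective hnt |>.ne hij)
    · -- several classes: everyone is on side B
      push_neg at hone
      obtain ⟨p₀, q₀, hpq₀⟩ := hone
      have hsideF : ∀ i : Fin t, side (f i) = false := by
        intro i
        by_cases h : c p₀ = c i
        · have hiq : c i ≠ c q₀ := by rw [← h]; exact hpq₀
          have hij : i ≠ q₀ := fun he => hiq (by rw [he])
          exact ((key i q₀ hij).2 hiq).1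
        · have hij : i ≠ p₀ := fun he => h (by rw [he])
          exact ((key i p₀ hij).2 (fun he => h he.symm)).1
      set S : Finset (Fin k) := Finset.univ.image c with hS
      have hSred : ∀ p ∈ S, ∀ q ∈ S, p ≠ q → φ p q = true := by
        intro p hp q hq hpq
        obtain ⟨i, -, hi⟩ := Finset.mem_image.mp hp
        obtain ⟨j, -, hj⟩ := Finset.mem_image.mp hq
        have hij : i ≠ j := fun he => hpq (by rw [← hi, ← hj, he])
        have := ((key i j hij).2 (by rw [show idx (f i) = c i from rfl,
          show idx (f j) = c j from rfl, hi, hj]; exact hpq)).2.2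
        rwa [show idx (f i) = c i from rfl, show idx (f j) = c j from rfl, hi, hj] at this
      have hScard : S.card ≤ a := by
        by_contra h
        push_neg at h
        obtain ⟨g, hg⟩ := exists_emb_of_card_le S (n := a + 1) h
        exact hφred ⟨g, fun i j hij => hSred _ (hg i) _ (hg j)
          (fun he => hij (g.injective he))⟩
      have hfiber : ∀ p ∈ S, (Finset.univ.filter (fun i => c i = p)).card ≤ n - 1 := by
        intro p _
        by_contra h
        push_neg at h
        have h' : n ≤ (Finset.univ.filter (fun i => c i = p)).card := by omega
        obtain ⟨g, hg⟩ := exists_emb_of_card_le _ h'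
        refine hB ⟨g.trans f, fun i => hsideF _, ?_⟩
        intro i j hij
        have hgi := (Finset.mem_filter.mp (hg i)).2
        have hgj := (Finset.mem_filter.mp (hg j)).2
        have hgij : g i ≠ g j := fun he => hij (g.injective he)
        exact (key _ _ hgij).1 (by rw [show idx (f (g i)) = c (g i) from rfl,
          show idx (f (g j)) = c (g j) from rfl, hgi, hgj])
      have hcount : t ≤ S.card * (n - 1) := by
        have h1 : (Finset.univ : Finset (Fin t)).card =
            ∑ p ∈ S, (Finset.univ.filter (fun i => c i = p)).card :=
          Finset.card_eq_sum_card_fiberwise (fun x _ => Finset.mem_image_of_mem c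
            (Finset.mem_univ x))
        rw [Finset.card_univ, Fintype.card_fin] at h1
        rw [h1]
        calc ∑ p ∈ S, (Finset.univ.filter (fun i => c i = p)).card
            ≤ ∑ _p ∈ S, (n - 1) := Finset.sum_le_sum hfiber
          _ = S.card * (n - 1) := by rw [Finset.sum_const, smul_eq_mul]
      have h2 : S.card * (n - 1) ≤ a * (n - 1) := Nat.mul_le_mul_right _ hScard
      have h3 : a * (n - 1) + a = a * n := by
        rw [← Nat.mul_succ]
        congr 1
        omega
      omega
  · -- no blue K_s
    rintro ⟨f, hf⟩
    have hinj : Function.Injective (fun i => idx (f i)) := by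
      intro i j h
      by_contra hij
      obtain ⟨-, hcol⟩ := hf i j hij
      rw [if_pos h] at hcol
      exact absurd hcol (by simp)
    have := Fintype.card_le_of_injective _ hinj
    simp only [Fintype.card_fin] at this
    omega
end
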